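/- If ∇ is a Cartan connection on L, then the operation ∇̄_X Y := ∇_{ρ(Y)} X + ⁅X, Y⁆ is a flat 𝔤-connection of L on itself, i.e. a representation: it satisfies the Leibniz rule ∇̄_X(a • Y) = a • ∇̄_X Y + ρ(X)(a) • Y and the flatness identity ∇̄_X(∇̄_Y Z) − ∇̄_Y(∇̄_X Z) − ∇̄_{⁅X,Y⁆} Z = 0 for all X, Y, Z ∈ L and a ∈ A. (Second claim of Proposition 5.3, for the 𝔤-connection (z3) of 𝔤 on itself.) -/
import Mathlib


variable {R A L : Type*} [CommRing R] [CommRing A] [Algebra R A]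
  [LieRing L] [LieAlgebra R L] [Module A L]
  [IsScalarTower R A L] [SMulCommClass R A L] [SMulCommClass A R L]

/-- The induced `𝔤`-connection on derivations: `∇̄_X V := ρ(∇_V X) + ⁅ρ(X), V⁆`. -/
def barDer (ρ : L →ₗ[A] Derivation R A A) (D : Derivation R A A → L → L)
    (X : L) (V : Derivation R A A) : Derivation R A A :=
  ρ (D V X) + ⁅ρ X, V⁆

/-- The induced `𝔤`-connection of `L` on itself: `∇̄_X Y := ∇_{ρ(Y)} X + ⁅X, Y⁆`. -/
def barSelf (ρ : L →ₗ[A] Derivation R A A) (D : Derivation R A A → L → L)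
    (X Y : L) : L :=
  D (ρ Y) X + ⁅X, Y⁆

/-- `D` is a connection on `L`: additive in both arguments, `A`-linear in the
derivation argument, and satisfying the Leibniz rule. -/
def IsConnection (D : Derivation R A A → L → L) : Prop :=
  (∀ (V W : Derivation R A A) (X : L), D (V + W) X = D V X + D W X) ∧
  (∀ (V : Derivation R A A) (X Y : L), D V (X + Y) = D V X + D V Y) ∧
  (∀ (a : A) (V : Derivation R A A) (X : L), D (a • V) X = a • D V X) ∧
  (∀ (V : Derivation R A A) (a : A) (X : L), D V (a • X) = a • D V X + V a • X)

/-- `D` is a Cartan connection: it is compatible with the bracket of `L`. -/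
def IsCartanConnection (ρ : L →ₗ[A] Derivation R A A)
    (D : Derivation R A A → L → L) : Prop :=
  ∀ (V : Derivation R A A) (X Y : L),
    D V ⁅X, Y⁆ = ⁅D V X, Y⁆ + ⁅X, D V Y⁆
      + D (barDer ρ D Y V) X - D (barDer ρ D X V) Y

/-- If `∇` is a Cartan connection on `L`, then
`∇̄_X Y := ∇_{ρ(Y)} X + ⁅X, Y⁆` is a flat `𝔤`-connection of `L` on itself,
i.e. a representation: it satisfies the Leibniz rule and the flatness identity. -/
theorem barSelf_is_representation
(ρ : L →ₗ[A] Derivation R A A)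
    (hanchor : ∀ X Y : L, ρ ⁅X, Y⁆ = ⁅ρ X, ρ Y⁆)
    (hleib : ∀ (X : L) (a : A) (Y : L), ⁅X, a • Y⁆ = a • ⁅X, Y⁆ + ρ X a • Y)
    (D : Derivation R A A → L → L) (hD : IsConnection D)
    (hC : IsCartanConnection ρ D) :
    (∀ (X : L) (a : A) (Y : L),
        barSelf ρ D X (a • Y) = a • barSelf ρ D X Y + ρ X a • Y) ∧
    (∀ X Y Z : L,
        barSelf ρ D X (barSelf ρ D Y Z) - barSelf ρ D Y (barSelf ρ D X Z)
          - barSelf ρ D ⁅X, Y⁆ Z = 0) := by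
  obtain ⟨h1, h2, h3, h4⟩ := hD
  constructor
  · intro X a Y
    simp only [barSelf, map_smul, h3, hleib, smul_add]
    abel
  · intro X Y Z
    simp only [barSelf, map_add, hanchor, h1, lie_add]
    rw [hC (ρ Z) X Y]
    simp only [barDer, h1]
    rw [← lie_skew Y (D (ρ Z) X), lie_lie]
    abel
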